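/- arXiv:2605.05457 — 7 statements merged into one kernel-verified Lean document; each statement's English description precedes it below -/
import Mathlib

section
/- Let q be a prime power, F_q the finite field with q elements, and χ a nontrivial additive character of F_q with values in the complex numbers. Then the character sum over invertible matrices Σ_{B ∈ GL_3(F_q)} χ(b_{11}) = -q^6 + q^5 + q^4 - q^3, where b_{11} denotes the (1,1) entry of B. -/
/-!
Let `GL₃(F_q)` act on `F_q³` and put `ψ(v) = χ(v₀)`, so that the sum is `S = ∑_B ψ(B e₀)`.
As `GL₃` is transitive on nonzero vectors, `∑_B ψ(B v)` equals `S` for `v ≠ 0` and `|GL₃|` for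
`v = 0`. Summed over all `v` this vanishes, because after swapping the sums every inner sum is the
full sum of the nontrivial character `ψ`. Hence `(q³ - 1) S = -|GL₃| = -(q³ - 1)(q³ - q)(q³ - q²)`.
-/

open Matrix

theorem AddChar.compAddMonoidHom_ne_one {A B M : Type*} [AddMonoid A] [AddMonoid B] [Monoid M]
    {ψ : AddChar B M} (hψ : ψ ≠ 1) {f : A →+ B} (hf : Function.Surjective f) :
    ψ.compAddMonoidHom f ≠ 1 := by
  obtain ⟨b, hb⟩ := AddChar.ne_one_iff.1 hψ
  obtain ⟨a, rfl⟩ := hf b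
  exact AddChar.ne_one_iff.2 ⟨a, hb⟩

theorem AddChar.card_sub_one_mul_sum_smul_eq_neg_card {G V R : Type*} [Group G] [Fintype G]
    [AddCommGroup V] [Fintype V] [DistribMulAction G V] [CommRing R] [IsDomain R]
    {ψ : AddChar V R} (hψ : ψ ≠ 1) {x : V} (htrans : ∀ v ≠ 0, ∃ g : G, g • x = v) :
    ((Fintype.card V : R) - 1) * ∑ g : G, ψ (g • x) = -Fintype.card G := by
  classical
  have h_orbit (v : V) (hv : v ∈ ({0}ᶜ : Finset V)) :
      ∑ g : G, ψ (g • v) = ∑ g : G, ψ (g • x) := by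
    obtain ⟨h, rfl⟩ := htrans v (by simpa using hv)
    simp_rw [smul_smul]
    exact Equiv.sum_comp (Equiv.mulRight h) fun g ↦ ψ (g • x)
  have h_total : ∑ v : V, ∑ g : G, ψ (g • v) = 0 := by
    rw [Finset.sum_comm]
    refine Finset.sum_eq_zero fun g _ ↦ ?_
    exact (Equiv.sum_comp (MulAction.toPerm g) ψ).trans (AddChar.sum_eq_zero_of_ne_one hψ)
  rw [Fintype.sum_eq_add_sum_compl (0 : V), Finset.sum_congr rfl h_orbit, Finset.sum_const,
    Finset.card_compl, Finset.card_singleton, nsmul_eq_mul,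
    Nat.cast_sub Fintype.card_pos] at h_total
  simp only [smul_zero, AddChar.map_zero_eq_one, Finset.sum_const, Finset.card_univ,
    nsmul_eq_mul, mul_one, Nat.cast_one] at h_total
  linear_combination h_total

namespace Matrix.GeneralLinearGroup

theorem exists_smul_eq {n K : Type*} [Fintype n] [DecidableEq n] [Field K] {v w : n → K}
    (hv : v ≠ 0) (hw : w ≠ 0) : ∃ g : GL n K, g • v = w := by
  obtain ⟨e, he⟩ := Submodule.exists_linearEquiv_restrict_eq
    ((LinearEquiv.toSpanNonzeroSingleton K _ v hv).symm ≪≫ₗ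
      LinearEquiv.toSpanNonzeroSingleton K _ w hw)
  have h_ev : e v = w := by
    have := he (LinearEquiv.toSpanNonzeroSingleton K _ v hv 1)
    rwa [LinearEquiv.trans_apply, LinearEquiv.symm_apply_apply,
      LinearEquiv.toSpanNonzeroSingleton_one, LinearEquiv.toSpanNonzeroSingleton_one,
      eq_comm] at this
  exact ⟨toLin.symm (LinearMap.GeneralLinearGroup.ofLinearEquiv e),
    (LinearMap.toMatrix'_mulVec (e : (n → K) →ₗ[K] n → K) v).trans h_ev⟩

theorem card_pow_sub_one_mul_sum_addChar_apply {ι F R : Type*} [Fintype ι] [DecidableEq ι]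
    [Field F] [Fintype F] [DecidableEq F] [CommRing R] [IsDomain R]
    {χ : AddChar F R} (hχ : χ ≠ 1) (i j : ι) :
    ((Fintype.card F : R) ^ Fintype.card ι - 1) * ∑ B : GL ι F, χ ((B : Matrix ι ι F) i j) =
      -Fintype.card (GL ι F) := by
  have hψ : χ.compAddMonoidHom (Pi.evalAddMonoidHom (fun _ ↦ F) i) ≠ 1 :=
    AddChar.compAddMonoidHom_ne_one hχ fun a ↦ ⟨fun _ ↦ a, rfl⟩
  have h_single : Pi.single j 1 ≠ (0 : ι → F) := by simp
  have := AddChar.card_sub_one_mul_sum_smul_eq_neg_card hψ fun _ hv ↦ exists_smul_eq h_single hv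
  rw [Fintype.card_fun] at this
  simpa [Units.smul_def, mulVec_single_one] using this

end Matrix.GeneralLinearGroup

theorem Matrix.natCast_card_GL_fin_three {F R : Type*} [Field F] [Fintype F] [DecidableEq F]
    [CommRing R] :
    (Fintype.card (GL (Fin 3) F) : R) =
      ((Fintype.card F : R) ^ 3 - 1) * (Fintype.card F ^ 3 - Fintype.card F) *
        (Fintype.card F ^ 3 - Fintype.card F ^ 2) := by
  have hle (k : Fin 3) : Fintype.card F ^ (k : ℕ) ≤ Fintype.card F ^ 3 :=
    Nat.pow_le_pow_right Fintype.card_pos k.is_lt.le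
  rw [← Nat.card_eq_fintype_card, card_GL_field, Fin.prod_univ_three, Nat.cast_mul, Nat.cast_mul,
    Nat.cast_sub (hle 0), Nat.cast_sub (hle 1), Nat.cast_sub (hle 2)]
  simp

/-- For a nontrivial additive character `χ` of the finite field with `q` elements,
`∑_{B ∈ GL_3(F_q)} χ(b₁₁) = -q^6 + q^5 + q^4 - q^3`. -/
theorem charSum_GL3_rank_one (q : ℕ) (F : Type*) [Field F] [Fintype F] [DecidableEq F]
    (hq : Fintype.card F = q) (χ : AddChar F ℂ) (hχ : χ ≠ 1) :
    ∑ B : GL (Fin 3) F, χ ((B : Matrix (Fin 3) (Fin 3) F) 0 0) =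
      -(q : ℂ) ^ 6 + (q : ℂ) ^ 5 + (q : ℂ) ^ 4 - (q : ℂ) ^ 3 := by
  subst hq
  have h_sum := GeneralLinearGroup.card_pow_sub_one_mul_sum_addChar_apply hχ (0 : Fin 3) 0
  rw [Fintype.card_fin, natCast_card_GL_fin_three] at h_sum
  have h_ne : (Fintype.card F : ℂ) ^ 3 - 1 ≠ 0 := by
    have : 1 < Fintype.card F ^ 3 := Nat.one_lt_pow (by norm_num) Fintype.one_lt_card
    exact sub_ne_zero.2 (by exact_mod_cast this.ne')
  apply mul_left_cancel₀ h_ne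
  linear_combination h_sum
end

section
/- Let q be a prime power, F_q the finite field with q elements, and χ a nontrivial additive character of F_q with values in the complex numbers. Then Σ_{B ∈ GL_3(F_q)} χ(b_{11} + b_{22}) = q^4 - q^3, where b_{11}, b_{22} denote the (1,1) and (2,2) entries of B. -/
/-! Via its columns, `GL_3(F_q)` is the set of linearly independent triples in `F_q^3`; the
summand depends only on the first two columns, and each independent pair has `q^3 - q^2`
completions. For independent functionals `φ, ψ`, the sum of `χ(φ x + ψ y)` over independent pairs
`(x, y)` is `q`: for fixed `x ≠ 0` the sum over all `y` vanishes, so only the excluded line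
`y = a x` is left, and for each of the `q` scalars `a` the sum of `χ((φ + a ψ) x)` over `x ≠ 0`
is `-1`. -/

open Finset

section LinearIndependent

variable {F V : Type*} [Field F] [Fintype F] [AddCommGroup V] [Module F V] [Fintype V]

open Classical in
theorem card_filter_notMem_span {k : ℕ} {v : Fin k → V} (hv : LinearIndependent F v) :
    #{x | x ∉ Submodule.span F (Set.range v)} = Fintype.card V - Fintype.card F ^ k := by
  have hspan : #{x | x ∈ Submodule.span F (Set.range v)} = Fintype.card F ^ k := by
    rw [← Fintype.card_subtype, Module.card_eq_pow_finrank (K := F), finrank_span_eq_card hv,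
      Fintype.card_fin]
  rw [filter_not, card_sdiff_of_subset (filter_subset _ _), hspan, card_univ]

open Classical in
theorem sum_linearIndependent_init {M : Type*} [AddCommMonoid M] (k : ℕ)
    (f : (Fin k → V) → M) :
    ∑ s : Fin (k + 1) → V, (if LinearIndependent F s then f (Fin.init s) else 0) =
      (Fintype.card V - Fintype.card F ^ k) •
        ∑ v : Fin k → V, if LinearIndependent F v then f v else 0 := by
  rw [← (Fin.snocEquiv fun _ => V).sum_comp, Fintype.sum_prod_type, sum_comm, smul_sum]
  refine sum_congr rfl fun v _ => ?_
  simp only [Fin.snocEquiv, Equiv.coe_fn_mk, Fin.init_snoc, linearIndependent_finSnoc, ite_and]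
  split_ifs with hv
  · rw [← sum_filter, sum_const, card_filter_notMem_span hv]
  · simp only [sum_const_zero, smul_zero]

open Classical in
theorem sum_ite_linearIndependent_pair {M : Type*} [AddCommGroup M] {x : V} (hx : x ≠ 0)
    (g : V → M) :
    ∑ y, (if LinearIndependent F ![x, y] then g y else 0) = ∑ y, g y - ∑ a : F, g (a • x) := by
  have hline : ({y | LinearIndependent F ![x, y]} : Finset V) =
      univ \ univ.image fun a : F => a • x := by
    ext y
    simp [LinearIndependent.pair_iff' hx]
  rw [← sum_filter, hline, sum_sdiff_eq_sub (subset_univ _),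
    sum_image fun a _ b _ hab => smul_left_injective F hx hab]

end LinearIndependent

section AddChar

variable {F V R : Type*} [Field F] [AddCommGroup V] [Module F V] [Fintype V]
  [CommRing R] [IsDomain R] {χ : AddChar F R}

theorem AddChar.sum_comp_linearMap_eq_zero (hχ : χ ≠ 1) {φ : V →ₗ[F] F} (hφ : φ ≠ 0) :
    ∑ v, χ (φ v) = 0 := by
  refine AddChar.sum_eq_zero_of_ne_one (ψ := χ.compAddMonoidHom φ.toAddMonoidHom) ?_
  obtain ⟨t, ht⟩ := AddChar.ne_one_iff.1 hχ
  obtain ⟨v, rfl⟩ := LinearMap.surjective_of_ne_zero hφ t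
  exact AddChar.ne_one_iff.2 ⟨v, ht⟩

theorem AddChar.sum_erase_zero_comp_linearMap [DecidableEq V] (hχ : χ ≠ 1) {φ : V →ₗ[F] F}
    (hφ : φ ≠ 0) : ∑ v ∈ univ.erase 0, χ (φ v) = -1 := by
  rw [sum_erase_eq_sub (mem_univ 0), sum_comp_linearMap_eq_zero hχ hφ, map_zero,
    AddChar.map_zero_eq_one, zero_sub]

open Classical in
theorem AddChar.sum_linearIndependent_pair_eq_card [Fintype F] (hχ : χ ≠ 1)
    {φ ψ : V →ₗ[F] F} (hφψ : LinearIndependent F ![φ, ψ]) :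
    ∑ s : Fin 2 → V, (if LinearIndependent F s then χ (φ (s 0) + ψ (s 1)) else 0) =
      Fintype.card F := by
  have hψ : ψ ≠ 0 := fun h => by
    simpa using LinearIndependent.pair_iff.1 hφψ 0 1 (by simp [h])
  have hφaψ (a : F) : φ + a • ψ ≠ 0 := fun h => by
    simpa using LinearIndependent.pair_iff.1 hφψ 1 a (by simpa using h)
  calc ∑ s : Fin 2 → V, (if LinearIndependent F s then χ (φ (s 0) + ψ (s 1)) else 0)
      = ∑ x, ∑ y, if LinearIndependent F ![x, y] then χ (φ x + ψ y) else 0 := by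
        rw [← Fintype.sum_prod_type']
        exact (Fintype.sum_equiv (piFinTwoEquiv fun _ => V).symm _ _ fun _ => rfl).symm
    _ = ∑ x ∈ univ.erase 0, ∑ y,
          if LinearIndependent F ![x, y] then χ (φ x + ψ y) else 0 := by
        have hzero : ∑ y, (if LinearIndependent F ![0, y] then χ (φ 0 + ψ y) else 0) = 0 :=
          sum_eq_zero fun y _ => if_neg fun h => h.ne_zero 0 rfl
        rw [← add_sum_erase _ _ (mem_univ 0), hzero, zero_add]
    _ = ∑ x ∈ univ.erase 0, -∑ a : F, χ ((φ + a • ψ) x) := by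
        refine sum_congr rfl fun x hx => ?_
        rw [sum_ite_linearIndependent_pair (ne_of_mem_erase hx)]
        simp [AddChar.map_add_eq_mul, ← mul_sum, sum_comp_linearMap_eq_zero hχ hψ]
    _ = Fintype.card F := by
        rw [sum_neg_distrib, sum_comm,
          sum_congr rfl fun a _ => sum_erase_zero_comp_linearMap hχ (hφaψ a)]
        simp

end AddChar

open Classical in
theorem Matrix.sum_GL_eq_sum_linearIndependent {F M : Type*} [Field F] [Fintype F]
    [DecidableEq F] [AddCommMonoid M] (n : ℕ) (f : (Fin n → Fin n → F) → M) :
    ∑ B : GL (Fin n) F, f (B : Matrix (Fin n) (Fin n) F).col =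
      ∑ s : Fin n → Fin n → F, if LinearIndependent F s then f s else 0 := by
  rw [← sum_filter, Finset.sum_subtype (p := fun s => LinearIndependent F s) _ (by simp)]
  exact Fintype.sum_equiv (Matrix.equiv_GL_linearindependent n) _ _ fun B => rfl

theorem LinearMap.linearIndependent_proj_pair {F ι : Type*} [Field F] [DecidableEq ι] {i j : ι}
    (hij : i ≠ j) :
    LinearIndependent F ![(LinearMap.proj i : (ι → F) →ₗ[F] F), LinearMap.proj j] := by
  refine LinearIndependent.pair_iff.2 fun s t h => ⟨?_, ?_⟩
  · simpa [hij.symm] using LinearMap.congr_fun h (Pi.single i 1)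
  · simpa [hij] using LinearMap.congr_fun h (Pi.single j 1)

/-- For a nontrivial additive character `χ` of the finite field with `q` elements,
`∑_{B ∈ GL_3(F_q)} χ(b₁₁ + b₂₂) = q^4 - q^3`. -/
theorem charSum_GL3_rank_two (q : ℕ) (F : Type*) [Field F] [Fintype F] [DecidableEq F]
    (hq : Fintype.card F = q) (χ : AddChar F ℂ) (hχ : χ ≠ 1) :
    ∑ B : GL (Fin 3) F,
        χ ((B : Matrix (Fin 3) (Fin 3) F) 0 0 + (B : Matrix (Fin 3) (Fin 3) F) 1 1) =
      (q : ℂ) ^ 4 - (q : ℂ) ^ 3 := by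
  classical
  subst hq
  let π : Fin 3 → (Fin 3 → F) →ₗ[F] F := LinearMap.proj
  calc _ = ∑ s : Fin 3 → Fin 3 → F,
          if LinearIndependent F s then χ (π 0 (Fin.init s 0) + π 1 (Fin.init s 1)) else 0 :=
        Matrix.sum_GL_eq_sum_linearIndependent 3 fun s => χ (s 0 0 + s 1 1)
    _ = (Fintype.card F ^ 3 - Fintype.card F ^ 2) • (Fintype.card F : ℂ) := by
        rw [sum_linearIndependent_init 2 fun v => χ (π 0 (v 0) + π 1 (v 1)),
          AddChar.sum_linearIndependent_pair_eq_card hχ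
            (LinearMap.linearIndependent_proj_pair (by decide)),
          Fintype.card_fun, Fintype.card_fin]
    _ = (Fintype.card F : ℂ) ^ 4 - (Fintype.card F : ℂ) ^ 3 := by
        rw [nsmul_eq_mul, Nat.cast_sub (Nat.pow_le_pow_right Fintype.card_pos (by norm_num))]
        push_cast
        ring
end

section
/- Let q be a prime power, F_q the finite field with q elements, and χ a nontrivial additive character of F_q with values in the complex numbers. Then Σ_{B ∈ GL_3(F_q)} χ(tr(B)) = -q^3, where tr(B) = b_{11} + b_{22} + b_{33} is the trace of B. -/
set_option linter.unusedSectionVars false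

open Finset Matrix

section Aux

variable {F : Type*} [Field F] [Fintype F] [DecidableEq F]

private lemma aux_translate (χ : AddChar F ℂ) (hχ : χ ≠ 1)
    (s : Finset (Matrix (Fin 3) (Fin 3) F)) (E : Matrix (Fin 3) (Fin 3) F)
    (hE : E.trace = 1) (hs : ∀ M ∈ s, ∀ c : F, M + c • E ∈ s) :
    ∑ M ∈ s, χ M.trace = 0 := by
  obtain ⟨c, hc⟩ := AddChar.ne_one_iff.mp hχ
  have key : ∑ M ∈ s, χ M.trace = χ c * ∑ M ∈ s, χ M.trace := by
    rw [Finset.mul_sum]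
    refine Finset.sum_nbij' (fun M => M + (-c) • E) (fun M => M + c • E)
      (fun M hM => hs M hM (-c)) (fun M hM => hs M hM c) ?_ ?_ ?_
    · intro M _; simp [add_assoc, ← add_smul]
    · intro M _; simp [add_assoc, ← add_smul]
    · intro M _
      rw [trace_add, trace_smul, hE, smul_eq_mul, mul_one, ← AddChar.map_add_eq_mul]
      congr 1
      ring
  have h2 : (χ c - 1) * ∑ M ∈ s, χ M.trace = 0 := by
    rw [sub_mul, one_mul, ← key, sub_self]
  rcases mul_eq_zero.mp h2 with h | h
  · exact absurd (sub_eq_zero.mp h) hc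
  · exact h

private lemma aux_inner_zero (χ : AddChar F ℂ) (hχ : χ ≠ 1) {k : ℕ}
    (A : Matrix (Fin 3) (Fin k) F) (φ : Fin 3 → F) (hφ : φ ≠ 0) (hφA : φ ᵥ* A = 0) :
    ∑ M ∈ univ.filter (fun M : Matrix (Fin 3) (Fin 3) F => M * A = 0), χ M.trace = 0 := by
  obtain ⟨j, hj⟩ : ∃ j, φ j ≠ 0 := Function.ne_iff.mp hφ
  set E : Matrix (Fin 3) (Fin 3) F :=
    Matrix.of (fun a b => if a = j then (φ j)⁻¹ * φ b else 0) with hEdef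
  have hEtr : E.trace = 1 := by
    have h1 : E.trace = ∑ a, E a a := rfl
    have h2 : ∀ a, E a a = if a = j then (φ j)⁻¹ * φ a else 0 := fun a => rfl
    rw [h1, Finset.sum_congr rfl (fun a _ => h2 a),
      Finset.sum_ite_eq' univ j (fun a => (φ j)⁻¹ * φ a)]
    simp [inv_mul_cancel₀ hj]
  have hEA : E * A = 0 := by
    ext a b
    rw [Matrix.mul_apply, Matrix.zero_apply]
    by_cases ha : a = j
    · have h3 : ∀ x, E a x * A x b = (φ j)⁻¹ * (φ x * A x b) := by
        intro x
        show (if a = j then (φ j)⁻¹ * φ x else 0) * A x b = _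
        rw [if_pos ha]; ring
      rw [Finset.sum_congr rfl (fun x _ => h3 x), ← Finset.mul_sum]
      have h0 : ∑ x, φ x * A x b = 0 := by
        have := congrFun hφA b
        simpa [Matrix.vecMul, dotProduct] using this
      rw [h0, mul_zero]
    · have h3 : ∀ x, E a x * A x b = 0 := by
        intro x
        show (if a = j then (φ j)⁻¹ * φ x else 0) * A x b = 0
        rw [if_neg ha, zero_mul]
      rw [Finset.sum_congr rfl (fun x _ => h3 x), Finset.sum_const, smul_zero]
  refine aux_translate χ hχ _ E hEtr ?_
  intro M hM c
  simp only [Finset.mem_filter, Finset.mem_univ, true_and] at hM ⊢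
  rw [Matrix.add_mul, hM, Matrix.smul_mul, hEA, smul_zero, add_zero]

private lemma aux_exists_phi {k : ℕ} (hk : k < 3) (A : Matrix (Fin 3) (Fin k) F) :
    ∃ φ : Fin 3 → F, φ ≠ 0 ∧ φ ᵥ* A = 0 := by
  have h1 : Module.finrank F (LinearMap.range A.vecMulLinear)
      + Module.finrank F (LinearMap.ker A.vecMulLinear) = 3 := by
    rw [LinearMap.finrank_range_add_finrank_ker, Module.finrank_fintype_fun_eq_card,
      Fintype.card_fin]
  have h2 : Module.finrank F (LinearMap.range A.vecMulLinear) ≤ k := by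
    have := Submodule.finrank_le (LinearMap.range A.vecMulLinear)
    rwa [Module.finrank_fintype_fun_eq_card, Fintype.card_fin] at this
  have h3 : 0 < Module.finrank F (LinearMap.ker A.vecMulLinear) := by omega
  obtain ⟨⟨φ, hφmem⟩, hφne⟩ := Module.finrank_pos_iff_exists_ne_zero.mp h3
  refine ⟨φ, ?_, hφmem⟩
  intro h
  exact hφne (Subtype.ext h)

private lemma aux_swap (χ : AddChar F ℂ) (k : ℕ) :
    ∑ A : Matrix (Fin 3) (Fin k) F,
        ∑ M ∈ univ.filter (fun M : Matrix (Fin 3) (Fin 3) F => M * A = 0), χ M.trace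
      = ∑ M : Matrix (Fin 3) (Fin 3) F,
          (((univ.filter (fun v : Fin 3 → F => M *ᵥ v = 0)).card : ℂ)) ^ k * χ M.trace := by
  simp only [Finset.sum_filter]
  rw [Finset.sum_comm]
  refine Finset.sum_congr rfl (fun M _ => ?_)
  rw [← Finset.sum_filter, Finset.sum_const, nsmul_eq_mul]
  congr 1
  rw [← Nat.cast_pow]
  congr 1
  have e : {A : Matrix (Fin 3) (Fin k) F // M * A = 0}
      ≃ (Fin k → {v : Fin 3 → F // M *ᵥ v = 0}) :=
    { toFun := fun A j => ⟨fun i => A.1 i j, by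
        funext i
        have := congrFun (congrFun A.2 i) j
        simpa [Matrix.mul_apply, Matrix.mulVec, dotProduct] using this⟩
      invFun := fun f => ⟨Matrix.of (fun i j => (f j).1 i), by
        ext i j
        have := congrFun (f j).2 i
        simpa [Matrix.mulVec, dotProduct, Matrix.mul_apply] using this⟩
      left_inv := fun A => Subtype.ext (by ext i j; rfl)
      right_inv := fun f => funext (fun j => Subtype.ext (by funext i; rfl)) }
  rw [← Fintype.card_subtype, ← Fintype.card_subtype, Fintype.card_congr e,
    Fintype.card_fun, Fintype.card_fin]

end Aux

set_option maxHeartbeats 1000000 in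
/-- For a nontrivial additive character `χ` of the finite field with `q` elements,
`∑_{B ∈ GL_3(F_q)} χ(tr B) = -q^3`. -/
theorem charSum_GL3_trace (q : ℕ) (F : Type*) [Field F] [Fintype F] [DecidableEq F]
    (hq : Fintype.card F = q) (χ : AddChar F ℂ) (hχ : χ ≠ 1) :
    ∑ B : GL (Fin 3) F, χ (Matrix.trace (B : Matrix (Fin 3) (Fin 3) F)) =
      -(q : ℂ) ^ 3 := by
  have hq2 : 2 ≤ q := by rw [← hq]; exact Fintype.one_lt_card
  set Kc : Matrix (Fin 3) (Fin 3) F → ℂ :=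
    fun M => (((univ.filter (fun v : Fin 3 → F => M *ᵥ v = 0)).card : ℂ)) with hKc
  -- the vanishing sums S_0 = S_1 = S_2 = 0
  have hS : ∀ k : ℕ, k < 3 →
      ∑ M : Matrix (Fin 3) (Fin 3) F, (Kc M) ^ k * χ M.trace = 0 := by
    intro k hk
    rw [← aux_swap χ k]
    refine Finset.sum_eq_zero (fun A _ => ?_)
    obtain ⟨φ, hφ, hφA⟩ := aux_exists_phi hk A
    exact aux_inner_zero χ hχ A φ hφ hφA
  -- the sum S_3 equals the cardinality of GL₃
  have hS3 : ∑ M : Matrix (Fin 3) (Fin 3) F, (Kc M) ^ 3 * χ M.trace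
      = ((Fintype.card (GL (Fin 3) F)) : ℂ) := by
    rw [← aux_swap χ 3]
    have hinner : ∀ A : Matrix (Fin 3) (Fin 3) F,
        ∑ M ∈ univ.filter (fun M : Matrix (Fin 3) (Fin 3) F => M * A = 0), χ M.trace
          = if IsUnit A then 1 else 0 := by
      intro A
      by_cases hA : IsUnit A
      · have h1 : univ.filter (fun M : Matrix (Fin 3) (Fin 3) F => M * A = 0) = {0} := by
          ext M
          simp only [Finset.mem_filter, Finset.mem_univ, true_and, Finset.mem_singleton]
          constructor
          · intro h
            obtain ⟨u, rfl⟩ := hA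
            calc M = M * ↑u * ↑u⁻¹ := by rw [Matrix.mul_assoc, u.mul_inv, Matrix.mul_one]
            _ = 0 := by rw [h, Matrix.zero_mul]
          · rintro rfl; exact Matrix.zero_mul A
        rw [h1, Finset.sum_singleton, Matrix.trace_zero, if_pos hA]
        exact AddChar.map_zero_eq_one χ
      · have hdet : A.det = 0 := by
          rwa [Matrix.isUnit_iff_isUnit_det, isUnit_iff_ne_zero, not_not] at hA
        obtain ⟨φ, hφ, hφ2⟩ := Matrix.exists_mulVec_eq_zero_iff.mpr
          (show Aᵀ.det = 0 by rwa [Matrix.det_transpose])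
        rw [if_neg hA]
        exact aux_inner_zero χ hχ A φ hφ (by rwa [← Matrix.mulVec_transpose])
    rw [Finset.sum_congr rfl (fun A _ => hinner A), Finset.sum_boole]
    congr 1
    rw [← Fintype.card_subtype]
    exact (Fintype.card_congr
      { toFun := fun u => ⟨(u : Matrix (Fin 3) (Fin 3) F), u.isUnit⟩
        invFun := fun x => x.2.unit
        left_inv := fun u => Units.ext u.isUnit.unit_spec
        right_inv := fun x => Subtype.ext x.2.unit_spec }).symm
  -- cardinality of GL₃ over F_q
  have hcardGL : ((Fintype.card (GL (Fin 3) F)) : ℂ)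
      = ((q:ℂ)^3 - 1) * ((q:ℂ)^3 - (q:ℂ)) * ((q:ℂ)^3 - (q:ℂ)^2) := by
    have h := Matrix.card_GL_field (𝔽 := F) (n := 3)
    rw [Nat.card_eq_fintype_card, hq] at h
    rw [h, Fin.prod_univ_three]
    have e0 : ((0 : Fin 3) : ℕ) = 0 := rfl
    have e1 : ((1 : Fin 3) : ℕ) = 1 := rfl
    have e2 : ((2 : Fin 3) : ℕ) = 2 := rfl
    rw [e0, e1, e2]
    have c0 : q ^ 0 ≤ q ^ 3 := Nat.pow_le_pow_right (by omega) (by omega)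
    have c1 : q ^ 1 ≤ q ^ 3 := Nat.pow_le_pow_right (by omega) (by omega)
    have c2 : q ^ 2 ≤ q ^ 3 := Nat.pow_le_pow_right (by omega) (by omega)
    push_cast [Nat.cast_sub c0, Nat.cast_sub c1, Nat.cast_sub c2]
    ring
  -- kernel sizes of non-invertible matrices
  have hK : ∀ M : Matrix (Fin 3) (Fin 3) F, ¬ IsUnit M →
      ∃ d, 1 ≤ d ∧ d ≤ 3 ∧ (univ.filter (fun v : Fin 3 → F => M *ᵥ v = 0)).card = q ^ d := by
    intro M hM
    refine ⟨Module.finrank F (LinearMap.ker M.mulVecLin), ?_, ?_, ?_⟩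
    · have hdet : M.det = 0 := by
        rwa [Matrix.isUnit_iff_isUnit_det, isUnit_iff_ne_zero, not_not] at hM
      obtain ⟨v, hv, hv2⟩ := Matrix.exists_mulVec_eq_zero_iff.mpr hdet
      have : 0 < Module.finrank F (LinearMap.ker M.mulVecLin) := by
        apply Module.finrank_pos_iff_exists_ne_zero.mpr
        refine ⟨⟨v, ?_⟩, ?_⟩
        · rw [LinearMap.mem_ker, Matrix.mulVecLin_apply]; exact hv2
        · simp only [ne_eq, Submodule.mk_eq_zero]; exact hv
      omega
    · have := Submodule.finrank_le (LinearMap.ker M.mulVecLin)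
      rwa [Module.finrank_fintype_fun_eq_card, Fintype.card_fin] at this
    · haveI : Fintype ↥(LinearMap.ker M.mulVecLin) := Fintype.ofFinite _
      calc (univ.filter (fun v : Fin 3 → F => M *ᵥ v = 0)).card
          = Fintype.card {v : Fin 3 → F // M *ᵥ v = 0} := (Fintype.card_subtype _).symm
        _ = Fintype.card (LinearMap.ker M.mulVecLin) :=
            Fintype.card_congr (Equiv.subtypeEquivRight (fun v => by
              simp [LinearMap.mem_ker, Matrix.mulVecLin_apply]))
        _ = q ^ Module.finrank F (LinearMap.ker M.mulVecLin) := by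
            rw [← hq]; exact Module.card_eq_pow_finrank
  -- the pointwise weight identity
  have hW : ∀ M : Matrix (Fin 3) (Fin 3) F,
      (Kc M - (q:ℂ)) * (Kc M - (q:ℂ)^2) * (Kc M - (q:ℂ)^3) * χ M.trace
        = ((1 - (q:ℂ)) * (1 - (q:ℂ)^2) * (1 - (q:ℂ)^3))
            * (if IsUnit M then χ M.trace else 0) := by
    intro M
    by_cases hM : IsUnit M
    · have h1 : univ.filter (fun v : Fin 3 → F => M *ᵥ v = 0) = {0} := by
        ext v
        simp only [Finset.mem_filter, Finset.mem_univ, true_and, Finset.mem_singleton]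
        constructor
        · intro h
          by_contra hv
          have hdet : M.det ≠ 0 := by
            rwa [Matrix.isUnit_iff_isUnit_det, isUnit_iff_ne_zero] at hM
          exact hdet (Matrix.exists_mulVec_eq_zero_iff.mp ⟨v, hv, h⟩)
        · rintro rfl; exact Matrix.mulVec_zero M
      rw [if_pos hM, hKc]
      simp only [h1, Finset.card_singleton]
      push_cast
      ring
    · rw [if_neg hM, mul_zero]
      obtain ⟨d, hd1, hd3, hcard⟩ := hK M hM
      rw [hKc]
      simp only [hcard]
      interval_cases d
      all_goals (push_cast; ring)
  -- identify the sum over GL with the sum over invertible matrices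
  have hGLsum : ∑ M : Matrix (Fin 3) (Fin 3) F, (if IsUnit M then χ M.trace else 0)
      = ∑ B : GL (Fin 3) F, χ (Matrix.trace (B : Matrix (Fin 3) (Fin 3) F)) := by
    rw [← Finset.sum_filter]
    refine Finset.sum_bij (fun M hM => ((Finset.mem_filter.mp hM).2).unit) ?_ ?_ ?_ ?_
    · intro a ha; exact Finset.mem_univ _
    · intro a ha b hb h
      have := congrArg (Units.val) h
      rwa [IsUnit.unit_spec, IsUnit.unit_spec] at this
    · intro B _
      refine ⟨(B : Matrix (Fin 3) (Fin 3) F), ?_, ?_⟩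
      · simp only [Finset.mem_filter, Finset.mem_univ, true_and]
        exact B.isUnit
      · exact Units.ext (IsUnit.unit_spec _)
    · intro a ha
      rw [IsUnit.unit_spec]
  -- put everything together
  have main : ((1 - (q:ℂ)) * (1 - (q:ℂ)^2) * (1 - (q:ℂ)^3))
      * ∑ B : GL (Fin 3) F, χ (Matrix.trace (B : Matrix (Fin 3) (Fin 3) F))
      = ((q:ℂ)^3 - 1) * ((q:ℂ)^3 - (q:ℂ)) * ((q:ℂ)^3 - (q:ℂ)^2) := by
    rw [← hGLsum, Finset.mul_sum]
    calc ∑ M : Matrix (Fin 3) (Fin 3) F,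
          ((1 - (q:ℂ)) * (1 - (q:ℂ)^2) * (1 - (q:ℂ)^3))
            * (if IsUnit M then χ M.trace else 0)
        = ∑ M : Matrix (Fin 3) (Fin 3) F,
            (Kc M - (q:ℂ)) * (Kc M - (q:ℂ)^2) * (Kc M - (q:ℂ)^3) * χ M.trace :=
          Finset.sum_congr rfl (fun M _ => (hW M).symm)
      _ = ∑ M : Matrix (Fin 3) (Fin 3) F,
            ((Kc M) ^ 3 * χ M.trace
              - ((q:ℂ) + (q:ℂ)^2 + (q:ℂ)^3) * ((Kc M) ^ 2 * χ M.trace)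
              + ((q:ℂ)^3 + (q:ℂ)^4 + (q:ℂ)^5) * ((Kc M) ^ 1 * χ M.trace)
              - (q:ℂ)^6 * ((Kc M) ^ 0 * χ M.trace)) :=
          Finset.sum_congr rfl (fun M _ => by ring)
      _ = (∑ M : Matrix (Fin 3) (Fin 3) F, (Kc M) ^ 3 * χ M.trace)
            - ((q:ℂ) + (q:ℂ)^2 + (q:ℂ)^3)
              * (∑ M : Matrix (Fin 3) (Fin 3) F, (Kc M) ^ 2 * χ M.trace)
            + ((q:ℂ)^3 + (q:ℂ)^4 + (q:ℂ)^5)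
              * (∑ M : Matrix (Fin 3) (Fin 3) F, (Kc M) ^ 1 * χ M.trace)
            - (q:ℂ)^6 * (∑ M : Matrix (Fin 3) (Fin 3) F, (Kc M) ^ 0 * χ M.trace) := by
          rw [Finset.sum_sub_distrib, Finset.sum_add_distrib, Finset.sum_sub_distrib,
            ← Finset.mul_sum, ← Finset.mul_sum, ← Finset.mul_sum]
      _ = ((q:ℂ)^3 - 1) * ((q:ℂ)^3 - (q:ℂ)) * ((q:ℂ)^3 - (q:ℂ)^2) := by
          rw [hS3, hS 2 (by omega), hS 1 (by omega), hS 0 (by omega), hcardGL]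
          ring
  -- cancel the nonzero factor
  have hpow : ∀ k : ℕ, 0 < k → (q:ℂ) ^ k ≠ 1 := by
    intro k hk0 h
    have h2 : ((q ^ k : ℕ) : ℂ) = ((1 : ℕ) : ℂ) := by push_cast; simpa using h
    have h3 : q ^ k = 1 := Nat.cast_injective h2
    have h4 : 1 < q ^ k := Nat.one_lt_pow (by omega) (by omega)
    omega
  have hne : ((1 - (q:ℂ)) * (1 - (q:ℂ)^2) * (1 - (q:ℂ)^3)) ≠ 0 := by
    refine mul_ne_zero (mul_ne_zero ?_ ?_) ?_
    · intro h; exact hpow 1 (by omega) (by rw [pow_one]; exact (sub_eq_zero.mp h).symm)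
    · intro h; exact hpow 2 (by omega) ((sub_eq_zero.mp h).symm)
    · intro h; exact hpow 3 (by omega) ((sub_eq_zero.mp h).symm)
  apply mul_left_cancel₀ hne
  rw [main]
  ring
end

section
/- Let q be a prime power and F_q the finite field with q elements. If X and Y are subsets of Mat_3(F_q) (the set of all 3×3 matrices over F_q) satisfying sqrt(|X|·|Y|) > q^6 + q^3 + 2, then there exist matrices A ∈ X and B ∈ Y such that B - A is invertible, i.e., B - A ∈ GL_3(F_q). -/
/-!
Let `S = GL₃(F_q) ⊆ Mat₃(F_q)`. If no `B - A` with `A ∈ X`, `B ∈ Y` lies in `S`, then by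
orthogonality of the additive characters `χ` of `Mat₃(F_q)` the sum
`∑_χ Ŷ(χ) conj X̂(χ) conj Ŝ(χ)` vanishes. Its term at `χ = 0` is `|X| |Y| |S|`, while by
Cauchy–Schwarz and Parseval the other terms add up to at most `max_{χ ≠ 0} |Ŝ(χ)| · q⁹ √(|X| |Y|)`.

To bound `Ŝ(χ)` for `χ ≠ 0`, view an invertible `n × n` matrix as a linearly independent family of
rows and pick a row `i` on which `χ` is nontrivial. With the other rows `t` fixed, the sum over the
admissible `i`-th rows `v ∉ span t` is `-∑_{v ∈ span t} χ(v)`, which vanishes unless `χ` is trivial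
on `span t`, and has absolute value `q^(n-1)` otherwise. Such `t` are bases of the largest subspace
on which `χ` is trivial, a proper subspace, so there are at most `|GL_{n-1}(F_q)|` of them. For
`n = 3` this gives `√(|X| |Y|) ≤ q⁹ · q² |GL₂| / |GL₃| = q⁹ / (q³ - 1) < q⁶ + q³ + 2`.
-/

open Finset Module ComplexConjugate

namespace AddChar

section Fourier

variable {G : Type*} [AddCommGroup G] [Fintype G]

theorem sum_norm_sum_apply_sq (X : Finset G) :
    ∑ χ : AddChar G ℂ, ‖∑ a ∈ X, χ a‖ ^ 2 = Fintype.card G * #X := by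
  classical
  have hχ (χ : AddChar G ℂ) : (‖∑ a ∈ X, χ a‖ ^ 2 : ℂ) = ∑ a ∈ X, ∑ b ∈ X, χ (a - b) := by
    rw [← Complex.mul_conj', map_sum, sum_mul_sum]
    simp [sub_eq_add_neg, map_add_eq_mul, map_neg_eq_conj]
  apply Complex.ofReal_injective
  push_cast
  simp_rw [hχ]
  rw [sum_comm]
  simp [sum_comm (γ := AddChar G ℂ), sum_apply_eq_ite, sub_eq_zero, mul_comm]

theorem sum_norm_mul_norm_le (X Y : Finset G) :
    ∑ χ : AddChar G ℂ, ‖∑ a ∈ X, χ a‖ * ‖∑ b ∈ Y, χ b‖ ≤ Fintype.card G * √(#X * #Y) :=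
  calc _ ≤ √(∑ χ : AddChar G ℂ, ‖∑ a ∈ X, χ a‖ ^ 2) * √(∑ χ : AddChar G ℂ, ‖∑ b ∈ Y, χ b‖ ^ 2) :=
        Real.sum_mul_le_sqrt_mul_sqrt _ _ _
    _ = Fintype.card G * √(#X * #Y) := by
        rw [sum_norm_sum_apply_sq, sum_norm_sum_apply_sq, ← Real.sqrt_mul (by positivity),
          show (Fintype.card G * #X * (Fintype.card G * #Y) : ℝ) = Fintype.card G ^ 2 * (#X * #Y)
            by ring, Real.sqrt_mul (by positivity), Real.sqrt_sq (by positivity)]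

theorem sum_mul_conj_mul_conj_eq_zero {X Y S : Finset G} (hXY : ∀ a ∈ X, ∀ b ∈ Y, b - a ∉ S) :
    ∑ χ : AddChar G ℂ, (∑ b ∈ Y, χ b) * conj (∑ a ∈ X, χ a) * conj (∑ c ∈ S, χ c) = 0 := by
  classical
  have hχ (χ : AddChar G ℂ) : (∑ b ∈ Y, χ b) * conj (∑ a ∈ X, χ a) * conj (∑ c ∈ S, χ c) =
      ∑ c ∈ S, ∑ a ∈ X, ∑ b ∈ Y, χ (b - a - c) := by
    simp only [map_sum, sum_mul, mul_sum, ← map_neg_eq_conj, sub_eq_add_neg, map_add_eq_mul]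
  simp_rw [hχ]
  rw [sum_comm]
  refine sum_eq_zero fun c hc => ?_
  rw [sum_comm]
  refine sum_eq_zero fun a ha => ?_
  rw [sum_comm]
  refine sum_eq_zero fun b hb => ?_
  rw [sum_apply_eq_ite, if_neg fun h => hXY a ha b hb (by rwa [sub_eq_zero.mp h])]

variable {X Y S : Finset G} {β : ℝ}

theorem card_mul_card_mul_card_le_of_forall_sub_notMem (hβ : 0 ≤ β)
    (hS : ∀ χ : AddChar G ℂ, χ ≠ 0 → ‖∑ c ∈ S, χ c‖ ≤ β) (hXY : ∀ a ∈ X, ∀ b ∈ Y, b - a ∉ S) :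
    #X * #Y * #S ≤ β * (Fintype.card G * √(#X * #Y)) := by
  classical
  set f : AddChar G ℂ → ℂ :=
    fun χ => (∑ b ∈ Y, χ b) * conj (∑ a ∈ X, χ a) * conj (∑ c ∈ S, χ c)
  have hf : f 0 + ∑ χ ∈ univ.erase (0 : AddChar G ℂ), f χ = 0 :=
    (add_sum_erase _ _ (mem_univ 0)).trans (sum_mul_conj_mul_conj_eq_zero hXY)
  calc (#X * #Y * #S : ℝ) = ‖f 0‖ := by
        rw [show f 0 = (#Y * #X * #S : ℕ) by simp [f], Complex.norm_natCast]
        push_cast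
        ring
    _ = ‖∑ χ ∈ univ.erase (0 : AddChar G ℂ), f χ‖ := by
        rw [eq_neg_of_add_eq_zero_left hf, norm_neg]
    _ ≤ ∑ χ ∈ univ.erase (0 : AddChar G ℂ), ‖f χ‖ := norm_sum_le _ _
    _ ≤ ∑ χ ∈ univ.erase (0 : AddChar G ℂ), β * (‖∑ a ∈ X, χ a‖ * ‖∑ b ∈ Y, χ b‖) := by
        refine sum_le_sum fun χ hχ => ?_
        simp only [f, norm_mul, Complex.norm_conj]
        rw [mul_comm β, mul_comm ‖∑ b ∈ Y, χ b‖]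
        gcongr
        exact hS χ (ne_of_mem_erase hχ)
    _ ≤ ∑ χ : AddChar G ℂ, β * (‖∑ a ∈ X, χ a‖ * ‖∑ b ∈ Y, χ b‖) :=
        sum_le_sum_of_subset_of_nonneg (erase_subset _ _) fun _ _ _ => by positivity
    _ ≤ β * (Fintype.card G * √(#X * #Y)) := by
        rw [← mul_sum]
        exact mul_le_mul_of_nonneg_left (sum_norm_mul_norm_le X Y) hβ

theorem card_mul_sqrt_le_of_forall_sub_notMem (hβ : 0 ≤ β)
    (hS : ∀ χ : AddChar G ℂ, χ ≠ 0 → ‖∑ c ∈ S, χ c‖ ≤ β) (hXY : ∀ a ∈ X, ∀ b ∈ Y, b - a ∉ S) :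
    #S * √(#X * #Y) ≤ β * Fintype.card G := by
  have hmain := card_mul_card_mul_card_le_of_forall_sub_notMem hβ hS hXY
  have hsq := Real.mul_self_sqrt (by positivity : (0 : ℝ) ≤ #X * #Y)
  set s := √(#X * #Y : ℝ)
  rcases (Real.sqrt_nonneg _ : 0 ≤ s).eq_or_lt with h0 | hpos
  · rw [show s = 0 from h0.symm, mul_zero]
    positivity
  · refine le_of_mul_le_mul_right ?_ hpos
    rw [← hsq] at hmain
    linarith

end Fourier

section kerSubmodule

variable (F : Type*) {V : Type*} [Ring F] [AddCommGroup V] [Module F V]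

/-- The largest `F`-submodule of `V` on which `φ` is trivial. -/
def kerSubmodule (φ : AddChar V ℂ) : Submodule F V where
  carrier := {v | ∀ c : F, φ (c • v) = 1}
  add_mem' {a b} ha hb c := by rw [smul_add, map_add_eq_mul, ha c, hb c, one_mul]
  zero_mem' c := by rw [smul_zero, map_zero_eq_one]
  smul_mem' d v hv c := by rw [smul_smul]; exact hv (c * d)

variable {F} {φ : AddChar V ℂ}

theorem mem_kerSubmodule {v : V} : v ∈ kerSubmodule F φ ↔ ∀ c : F, φ (c • v) = 1 := Iff.rfl

theorem kerSubmodule_ne_top (hφ : φ ≠ 0) : kerSubmodule F φ ≠ ⊤ := by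
  obtain ⟨v, hv⟩ := ne_one_iff.mp hφ
  intro h
  exact hv (by simpa using (h ▸ Submodule.mem_top : v ∈ kerSubmodule F φ) 1)

theorem sum_submodule_eq_zero {W : Submodule F V} [Fintype W] (hW : ¬W ≤ kerSubmodule F φ) :
    ∑ v : W, φ v = 0 := by
  refine (sum_eq_zero_iff_ne_zero (ψ := φ.compAddMonoidHom W.subtype.toAddMonoidHom)).mpr ?_
  obtain ⟨w, hwW, hwK⟩ := Set.not_subset.mp hW
  obtain ⟨c, hc⟩ : ∃ c : F, φ (c • w) ≠ 1 := by simpa [mem_kerSubmodule] using hwK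
  exact ne_one_iff.mpr ⟨⟨c • w, W.smul_mem c hwW⟩, hc⟩

open scoped Classical in
theorem norm_sum_notMem_submodule_le [Fintype V] (hφ : φ ≠ 0) (W : Submodule F V) :
    ‖∑ v with v ∉ W, φ v‖ ≤ if W ≤ kerSubmodule F φ then (Nat.card W : ℝ) else 0 := by
  have htot := sum_filter_not_add_sum_filter univ (· ∈ W) φ
  rw [sum_eq_zero_iff_ne_zero.mpr hφ,
    sum_subtype (univ.filter (· ∈ W)) (p := (· ∈ W)) (fun v => by simp)] at htot
  rw [eq_neg_of_add_eq_zero_left htot, norm_neg]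
  split_ifs with hW
  · refine (norm_sum_le _ _).trans ?_
    simp [norm_apply, Nat.card_eq_fintype_card]
  · rw [sum_submodule_eq_zero hW, norm_zero]

end kerSubmodule

theorem exists_apply_single_ne_one {ι V : Type*} [Fintype ι] [DecidableEq ι] [AddCommGroup V]
    {χ : AddChar (ι → V) ℂ} (hχ : χ ≠ 0) : ∃ i v, χ (Pi.single i v) ≠ 1 := by
  by_contra! h
  refine hχ (toAddMonoidHomEquiv.injective (AddMonoidHom.functions_ext _ _ _ fun i v => ?_))
  simp [h]

theorem apply_insertNth {V : Type*} [AddCommGroup V] {m : ℕ} (χ : AddChar (Fin (m + 1) → V) ℂ)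
    (i : Fin (m + 1)) (v : V) (t : Fin m → V) :
    χ (i.insertNth v t) = χ (Pi.single i v) * χ (i.insertNth 0 t) := by
  rw [← map_add_eq_mul, ← Fin.insertNth_zero_right, ← Fin.insertNth_add, add_zero, zero_add]

end AddChar

section LinearIndependent

variable {F V : Type*} [DivisionRing F] [AddCommGroup V] [Module F V]

theorem linearIndependent_insertNth {n : ℕ} (i : Fin (n + 1)) (x : V) (v : Fin n → V) :
    LinearIndependent F (i.insertNth x v) ↔
      LinearIndependent F v ∧ x ∉ Submodule.span F (Set.range v) := by
  rw [← linearIndependent_equiv (finSuccEquiv' i).symm, linearIndependent_option]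
  simp [Function.comp_def]

open scoped Classical in
theorem sum_linearIndependent_eq_sum_insertNth [Fintype V] {m : ℕ}
    (χ : AddChar (Fin (m + 1) → V) ℂ) (i : Fin (m + 1)) :
    ∑ s with LinearIndependent F s, χ s = ∑ t with LinearIndependent F t,
      χ (i.insertNth 0 t) * ∑ v with v ∉ Submodule.span F (Set.range t), χ (Pi.single i v) := by
  rw [sum_filter, ← (Fin.insertNthEquiv (fun _ => V) i).sum_comp, Fintype.sum_prod_type,
    sum_comm, sum_filter]
  refine sum_congr rfl fun t _ => ?_
  change ∑ v, (if LinearIndependent F (i.insertNth v t) then χ (i.insertNth v t) else 0) = _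
  simp only [linearIndependent_insertNth]
  by_cases ht : LinearIndependent F t
  · simp only [ht, true_and, if_true, mul_sum, sum_filter]
    refine sum_congr rfl fun v _ => ?_
    split_ifs
    · rw [mul_zero]
    · rw [AddChar.apply_insertNth, mul_comm]
  · simp [ht]

variable [Fintype F]

local notation "q" => Fintype.card F

theorem card_linearIndependent_le [Finite V] {m : ℕ} (h : finrank F V ≤ m) :
    Nat.card {t : Fin m → V // LinearIndependent F t} ≤ ∏ i : Fin m, (q ^ m - q ^ (i : ℕ)) := by
  rcases h.eq_or_lt with h | h
  · rw [card_linearIndependent h.ge, h]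
  · have : IsEmpty {t : Fin m → V // LinearIndependent F t} :=
      ⟨fun t => by simpa using (t.2.fintype_card_le_finrank.trans_lt h).ne⟩
    simp

variable [Fintype V]

open scoped Classical in
theorem card_filter_linearIndependent_span_le {m : ℕ} (W : Submodule F V) (hW : finrank F W ≤ m) :
    #{t : Fin m → V | LinearIndependent F t ∧ Submodule.span F (Set.range t) ≤ W} ≤
      ∏ i : Fin m, (q ^ m - q ^ (i : ℕ)) :=
  calc _ ≤ #((univ.filter fun t : Fin m → W => LinearIndependent F t).image (W.subtype ∘ ·)) := by
        refine card_le_card fun t ht => ?_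
        obtain ⟨hli, hspan⟩ := (mem_filter.mp ht).2
        have hmem (j : Fin m) : t j ∈ W := hspan (Submodule.subset_span ⟨j, rfl⟩)
        refine mem_image.mpr ⟨fun j => ⟨t j, hmem j⟩, mem_filter.mpr ⟨mem_univ _, ?_⟩, rfl⟩
        exact LinearIndependent.of_comp W.subtype hli
    _ ≤ Nat.card {t : Fin m → W // LinearIndependent F t} := by
        rw [Nat.card_eq_fintype_card, Fintype.card_subtype]
        exact card_image_le
    _ ≤ _ := card_linearIndependent_le hW

open scoped Classical in
theorem norm_sum_linearIndependent_le {m : ℕ} (hV : finrank F V ≤ m + 1)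
    {χ : AddChar (Fin (m + 1) → V) ℂ} (hχ : χ ≠ 0) :
    ‖∑ s with LinearIndependent F s, χ s‖ ≤ q ^ m * ∏ i : Fin m, (q ^ m - q ^ (i : ℕ)) := by
  obtain ⟨i, v₀, hv₀⟩ := AddChar.exists_apply_single_ne_one hχ
  set φ : AddChar V ℂ := χ.compAddMonoidHom (AddMonoidHom.single (fun _ => V) i)
  have hφ : φ ≠ 0 := AddChar.ne_one_iff.mpr ⟨v₀, hv₀⟩
  set K := AddChar.kerSubmodule F φ
  have hK : finrank F K ≤ m := by
    have := Submodule.finrank_lt (s := K) (AddChar.kerSubmodule_ne_top hφ)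
    omega
  have hterm (t : Fin m → V) (ht : t ∈ univ.filter fun t => LinearIndependent F t) :
      ‖χ (i.insertNth 0 t) * ∑ v with v ∉ Submodule.span F (Set.range t), φ v‖ ≤
        if Submodule.span F (Set.range t) ≤ K then (q ^ m : ℝ) else 0 := by
    have hcard : Nat.card (Submodule.span F (Set.range t)) = q ^ m := by
      rw [Nat.card_eq_fintype_card, Module.card_eq_pow_finrank (K := F),
        finrank_span_eq_card (mem_filter.mp ht).2, Fintype.card_fin]
    rw [norm_mul, AddChar.norm_apply, one_mul, ← Nat.cast_pow, ← hcard]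
    exact AddChar.norm_sum_notMem_submodule_le hφ _
  calc _ ≤ ∑ t with LinearIndependent F t,
        if Submodule.span F (Set.range t) ≤ K then (q ^ m : ℝ) else 0 := by
        rw [sum_linearIndependent_eq_sum_insertNth χ i]
        exact (norm_sum_le _ _).trans (sum_le_sum hterm)
    _ = q ^ m * #{t : Fin m → V | LinearIndependent F t ∧ Submodule.span F (Set.range t) ≤ K} := by
        rw [sum_ite, sum_const_zero, add_zero, sum_const, filter_filter, nsmul_eq_mul, mul_comm]
    _ ≤ q ^ m * ∏ i : Fin m, (q ^ m - q ^ (i : ℕ)) := by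
        gcongr
        exact_mod_cast card_filter_linearIndependent_span_le K hK

end LinearIndependent

namespace Matrix

variable {F : Type*} [Field F] [Fintype F]

local notation "q" => Fintype.card F

open scoped Classical in
theorem filter_isUnit_eq_map {n : Type*} [Fintype n] [DecidableEq n] :
    ({G : Matrix n n F | IsUnit G} : Finset _) =
      ({s : n → n → F | LinearIndependent F s} : Finset _).map of.toEmbedding := by
  ext G
  simp [← linearIndependent_rows_iff_isUnit, row]
  rfl

open scoped Classical in
theorem card_filter_isUnit (n : ℕ) :
    #{G : Matrix (Fin n) (Fin n) F | IsUnit G} = ∏ i : Fin n, (q ^ n - q ^ (i : ℕ)) := by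
  rw [filter_isUnit_eq_map, card_map, ← Fintype.card_subtype, ← Nat.card_eq_fintype_card,
    card_linearIndependent (by simp)]
  simp

open scoped Classical in
theorem norm_sum_isUnit_le {m : ℕ} {χ : AddChar (Matrix (Fin (m + 1)) (Fin (m + 1)) F) ℂ}
    (hχ : χ ≠ 0) :
    ‖∑ G with IsUnit G, χ G‖ ≤ q ^ m * ∏ i : Fin m, (q ^ m - q ^ (i : ℕ)) := by
  obtain ⟨G, hG⟩ := AddChar.ne_one_iff.mp hχ
  have hχ' : χ.compAddMonoidHom ofAddEquiv.toAddMonoidHom ≠ 0 :=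
    AddChar.ne_one_iff.mpr ⟨of.symm G, hG⟩
  rw [filter_isUnit_eq_map, sum_map]
  exact norm_sum_linearIndependent_le (finrank_fin_fun F).le hχ'

end Matrix

theorem cast_prod_pow_sub_pow {q : ℕ} (hq : 1 ≤ q) (n : ℕ) :
    ((∏ i : Fin n, (q ^ n - q ^ (i : ℕ)) : ℕ) : ℝ) = ∏ i : Fin n, ((q : ℝ) ^ n - q ^ (i : ℕ)) := by
  push_cast [Nat.cast_sub (Nat.pow_le_pow_right hq (Fin.is_lt _).le)]
  rfl

/-- The two sides differ by `q³ (q² - 1) (q - 1) (q³ - 2)`. -/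
theorem sq_mul_prod_mul_pow_nine_lt {q : ℕ} (hq : 2 ≤ q) :
    (q : ℝ) ^ 2 * ((∏ i : Fin 2, (q ^ 2 - q ^ (i : ℕ)) : ℕ) : ℝ) * q ^ 9 <
      ((q : ℝ) ^ 6 + q ^ 3 + 2) * ((∏ i : Fin 3, (q ^ 3 - q ^ (i : ℕ)) : ℕ) : ℝ) := by
  have hx : (2 : ℝ) ≤ q := mod_cast hq
  rw [cast_prod_pow_sub_pow (by omega), cast_prod_pow_sub_pow (by omega)]
  simp only [Fin.prod_univ_two, Fin.prod_univ_three, Fin.val_zero, Fin.val_one, Fin.val_two,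
    pow_zero, pow_one]
  have h1 : (0 : ℝ) < q - 1 := by linarith
  have h2 : (0 : ℝ) < q ^ 2 - 1 := by nlinarith
  have h3 : (0 : ℝ) < q ^ 3 - 2 := by nlinarith
  have hgap : 0 < (q : ℝ) ^ 3 * (q ^ 2 - 1) * (q - 1) * (q ^ 3 - 2) := by positivity
  linear_combination hgap

theorem spectral_gap_two_sets_general (q : ℕ) (F : Type*) [Field F] [Fintype F]
    (hq : Fintype.card F = q)
    (X Y : Finset (Matrix (Fin 3) (Fin 3) F))
    (h : Real.sqrt ((X.card : ℝ) * (Y.card : ℝ)) > (q : ℝ) ^ 6 + (q : ℝ) ^ 3 + 2) :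
    ∃ A ∈ X, ∃ B ∈ Y, IsUnit (B - A) := by
  classical
  by_contra! hXY
  have hcard : Fintype.card (Matrix (Fin 3) (Fin 3) F) = q ^ 9 := by
    rw [← Nat.card_eq_fintype_card, Matrix, Nat.card_fun, Nat.card_fun, Nat.card_eq_fintype_card,
      hq, Nat.card_fin, ← pow_mul]
  have hmix := AddChar.card_mul_sqrt_le_of_forall_sub_notMem
    (S := {G : Matrix (Fin 3) (Fin 3) F | IsUnit G}) (by positivity)
    (fun χ hχ => Matrix.norm_sum_isUnit_le (m := 2) hχ)
    (fun a ha b hb hS => hXY a ha b hb (mem_filter.mp hS).2)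
  rw [Matrix.card_filter_isUnit, hcard, hq] at hmix
  have hq2 : 2 ≤ q := hq ▸ Fintype.one_lt_card
  have hGL : 0 < ((∏ i : Fin 3, (q ^ 3 - q ^ (i : ℕ)) : ℕ) : ℝ) := mod_cast
    prod_pos fun i _ => Nat.sub_pos_of_lt (Nat.pow_lt_pow_right hq2 i.2)
  have := sq_mul_prod_mul_pow_nine_lt hq2
  rw [Nat.cast_pow] at hmix
  linarith [mul_lt_mul_of_pos_left h hGL]

/-- If `X, Y ⊆ Mat₃(F_q)` satisfy `√(|X|·|Y|) > q^6 + q^3 + 2`, then there exist `A ∈ X`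
and `B ∈ Y` with `B - A` invertible. -/
theorem spectral_gap_two_sets (q : ℕ) (F : Type*) [Field F] [Fintype F] [DecidableEq F]
    (hq : Fintype.card F = q)
    (X Y : Finset (Matrix (Fin 3) (Fin 3) F))
    (h : Real.sqrt ((X.card : ℝ) * (Y.card : ℝ)) > (q : ℝ) ^ 6 + (q : ℝ) ^ 3 + 2) :
    ∃ A ∈ X, ∃ B ∈ Y, IsUnit (B - A) :=
  spectral_gap_two_sets_general q F hq X Y h
end

section
/- Let q be a prime power and F_q the finite field with q elements. If X is a subset of Mat_3(F_q) with |X| > q^6 + q^3 + 2, then X contains two distinct matrices A and B such that B - A has nonzero determinant, i.e., B - A is invertible. -/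
/-!
The left-regular representation of `𝔽_{q³}` on itself, written in an `𝔽_q`-basis, embeds the
field `𝔽_{q³}` into `Mat₃(𝔽_q)`. Its image is an additive subgroup of index `q⁶` whose nonzero
elements are invertible. Since `|X| > q⁶`, two distinct elements of `X` lie in the same coset,
and their difference is a nonzero element of that copy of `𝔽_{q³}`.
-/

open Module

theorem AddSubgroup.exists_ne_sub_mem_of_index_lt {G : Type*} [AddCommGroup G]
    (K : AddSubgroup G) [K.FiniteIndex] (X : Finset G) (hX : K.index < X.card) :
    ∃ A ∈ X, ∃ B ∈ X, A ≠ B ∧ B - A ∈ K := by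
  have hcard : (Set.univ : Set (G ⧸ K)).ncard < (X : Set G).ncard := by
    rwa [Set.ncard_univ, Set.ncard_coe_finset, ← AddSubgroup.index_eq_card]
  obtain ⟨A, hA, B, hB, hne, hAB⟩ :=
    Set.exists_ne_map_eq_of_ncard_lt_of_maps_to hcard (f := ((↑) : G → G ⧸ K))
      (Set.mapsTo_univ _ _)
  exact ⟨A, hA, B, hB, hne, QuotientAddGroup.eq_iff_sub_mem.mp hAB.symm⟩

theorem AddMonoidHom.index_range_mul_natCard_of_injective {E G : Type*} [AddGroup E]
    [AddGroup G] {f : E →+ G} (hf : Function.Injective f) :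
    f.range.index * Nat.card E = Nat.card G := by
  rw [← Nat.card_range_of_injective hf]
  exact f.range.index_mul_card

theorem Algebra.det_leftMulMatrix_ne_zero {F E ι : Type*} [Field F] [Field E] [Algebra F E]
    [Fintype ι] [DecidableEq ι] (b : Basis ι F E) {x : E} (hx : x ≠ 0) :
    (Algebra.leftMulMatrix b x).det ≠ 0 :=
  ((Matrix.isUnit_iff_isUnit_det _).mp ((Ne.isUnit hx).map (Algebra.leftMulMatrix b))).ne_zero

theorem FiniteField.exists_addSubgroup_matrix_det_ne_zero (F : Type*) [Field F] [Finite F]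
    (n : ℕ) [NeZero n] :
    ∃ K : AddSubgroup (Matrix (Fin n) (Fin n) F),
      K.index = Nat.card F ^ (n * (n - 1)) ∧ ∀ M ∈ K, M ≠ 0 → M.det ≠ 0 := by
  obtain ⟨p, _⟩ := CharP.exists F
  have : Fact p.Prime := ⟨CharP.char_is_prime F p⟩
  let E := FiniteField.Extension F p n
  let b : Basis (Fin n) F E := finBasisOfFinrankEq F E (FiniteField.finrank_extension F p n)
  let f := (Algebra.leftMulMatrix b).toRingHom.toAddMonoidHom
  refine ⟨f.range, ?_, ?_⟩
  · have key := AddMonoidHom.index_range_mul_natCard_of_injective (f := f)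
      (Algebra.leftMulMatrix_injective b)
    rw [FiniteField.natCard_extension,
      Module.natCard_eq_pow_finrank (K := F) (V := Matrix (Fin n) (Fin n) F),
      Module.finrank_matrix, Module.finrank_self, Fintype.card_fin, mul_one] at key
    refine Nat.eq_of_mul_eq_mul_right (pow_pos Finite.card_pos n) (key.trans ?_)
    rw [← pow_add, Nat.mul_sub_one, Nat.sub_add_cancel (Nat.le_mul_self n)]
  · rintro _ ⟨x, rfl⟩ hM
    exact Algebra.det_leftMulMatrix_ne_zero b (by rintro rfl; exact hM (map_zero f))

theorem spectral_gap_one_set_general (q : ℕ) (F : Type*) [Field F] [Fintype F]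
    (hq : Fintype.card F = q)
    (X : Finset (Matrix (Fin 3) (Fin 3) F))
    (h : (X.card : ℝ) > (q : ℝ) ^ 6 + (q : ℝ) ^ 3 + 2) :
    ∃ A ∈ X, ∃ B ∈ X, A ≠ B ∧ (B - A).det ≠ 0 := by
  obtain ⟨K, hindex, hdet⟩ := FiniteField.exists_addSubgroup_matrix_det_ne_zero F 3
  have hX : K.index < X.card := by
    have hq3 : (0 : ℝ) ≤ (q : ℝ) ^ 3 := by positivity
    rw [hindex, Nat.card_eq_fintype_card, hq]
    exact_mod_cast (show (q : ℝ) ^ 6 < X.card by linarith)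
  obtain ⟨A, hA, B, hB, hne, hK⟩ := K.exists_ne_sub_mem_of_index_lt X hX
  exact ⟨A, hA, B, hB, hne, hdet _ hK (sub_ne_zero.mpr hne.symm)⟩

/-- If `X ⊆ Mat₃(F_q)` satisfies `|X| > q^6 + q^3 + 2`, then `X` contains two distinct
matrices whose difference has nonzero determinant. -/
theorem spectral_gap_one_set (q : ℕ) (F : Type*) [Field F] [Fintype F] [DecidableEq F]
    (hq : Fintype.card F = q)
    (X : Finset (Matrix (Fin 3) (Fin 3) F))
    (h : (X.card : ℝ) > (q : ℝ) ^ 6 + (q : ℝ) ^ 3 + 2) :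
    ∃ A ∈ X, ∃ B ∈ X, A ≠ B ∧ (B - A).det ≠ 0 :=
  spectral_gap_one_set_general q F hq X h
end

section
/- Let q be a prime power, F_q the finite field with q elements, and α a nonzero element of F_q. The number of invertible 3×3 matrices B over F_q whose (1,1) entry equals α and whose (2,2) entry equals -α is q·q^2·(q^3-q^2) + q(q-1)(q^2-1)(q^3-q^2); in particular this count is the same for every nonzero α. -/
/-!
Reading an invertible matrix column by column, it is a linearly independent triple of vectors
in `F³`, and the third column ranges freely over the `q³ - q²` vectors outside the plane spanned
by the first two. The first two columns `v₀, v₁` with `v₀ 0 = α`, `v₁ 1 = β` form `q⁴` pairs;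
since `β ≠ 0`, such a pair is dependent exactly when `v₀ = (α / v₁ 0) • v₁` with `v₁ 0 ≠ 0`
(using `α ≠ 0`), which leaves `(q - 1) q` dependent pairs. Hence the count is
`(q⁴ - (q - 1) q)(q³ - q²)`, which does not depend on `α, β`.
-/

open Module Submodule

theorem Nat.card_subtype_and_add_card_subtype_not_and {α : Type*} [Finite α] (p q : α → Prop) :
    Nat.card {a // p a ∧ q a} + Nat.card {a // ¬p a ∧ q a} = Nat.card {a // q a} := by
  classical
  have := Fintype.ofFinite α
  simp only [Nat.card_eq_fintype_card, Fintype.card_subtype]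
  rw [← Finset.card_filter_add_card_filter_not (s := Finset.univ.filter q) p]
  simp only [Finset.filter_filter, and_comm]

theorem Matrix.natCard_GL_subtype_col {𝔽 : Type*} [Field 𝔽] [Fintype 𝔽] (n : ℕ)
    (P : (Fin n → Fin n → 𝔽) → Prop) :
    Nat.card {B : GL (Fin n) 𝔽 // P (B : Matrix (Fin n) (Fin n) 𝔽).col} =
      Nat.card {s : Fin n → Fin n → 𝔽 // LinearIndependent 𝔽 s ∧ P s} :=
  Nat.card_congr <| ((equiv_GL_linearindependent n).subtypeEquiv fun _ => Iff.rfl).trans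
    (Equiv.subtypeSubtypeEquivSubtypeInter _ P)

section Extension

variable {K V : Type*} [DivisionRing K] [AddCommGroup V] [Module K V] [Finite V] {k : ℕ}

theorem natCard_compl_span_of_linearIndependent {v : Fin k → V} (hv : LinearIndependent K v) :
    Nat.card ((span K (Set.range v))ᶜ : Set V) = Nat.card K ^ finrank K V - Nat.card K ^ k := by
  rw [Nat.card_coe_set_eq, Set.ncard_compl, ← Nat.card_coe_set_eq, SetLike.coe_sort_coe,
    natCard_eq_pow_finrank (K := K) (V := V), natCard_eq_pow_finrank (K := K) (V := span K _),
    finrank_span_eq_card hv, Fintype.card_fin]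

variable (K) in
def linearIndependentSnocEquiv (P : (Fin k → V) → Prop) :
    {s : Fin (k + 1) → V // LinearIndependent K s ∧ P (Fin.init s)} ≃
      Σ v : {v : Fin k → V // LinearIndependent K v ∧ P v}, ((span K (Set.range v.1))ᶜ : Set V)
    where
  toFun s := ⟨⟨Fin.init s.1, (linearIndependent_finSucc'.1 s.2.1).1, s.2.2⟩,
    ⟨s.1 (Fin.last k), (linearIndependent_finSucc'.1 s.2.1).2⟩⟩
  invFun v := ⟨Fin.snoc v.1.1 v.2.1, linearIndependent_finSnoc.2 ⟨v.1.2.1, v.2.2⟩,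
    by simpa only [Fin.init_snoc] using v.1.2.2⟩
  left_inv s := Subtype.ext (Fin.snoc_init_self s.1)
  right_inv _ := Sigma.subtype_ext (Subtype.ext (Fin.init_snoc (α := fun _ => V) _ _))
    (Fin.snoc_last (α := fun _ => V) _ _)

theorem natCard_linearIndependent_snoc (P : (Fin k → V) → Prop) :
    Nat.card {s : Fin (k + 1) → V // LinearIndependent K s ∧ P (Fin.init s)} =
      Nat.card {v : Fin k → V // LinearIndependent K v ∧ P v} *
        (Nat.card K ^ finrank K V - Nat.card K ^ k) := by
  have := Fintype.ofFinite {v : Fin k → V // LinearIndependent K v ∧ P v}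
  rw [Nat.card_congr (linearIndependentSnocEquiv K P), Nat.card_sigma,
    Finset.sum_congr rfl fun v _ => natCard_compl_span_of_linearIndependent v.2.1,
    Finset.sum_const, Finset.card_univ, smul_eq_mul, ← Nat.card_eq_fintype_card]

end Extension

theorem exists_smul_eq_of_not_linearIndependent {K V : Type*} [DivisionRing K] [AddCommGroup V]
    [Module K V] {v : Fin 2 → V} (hv : ¬LinearIndependent K v) (h : v 1 ≠ 0) :
    ∃ a : K, a • v 1 = v 0 := by
  simpa [linearIndependent_fin2, h] using hv

theorem Pi.div_apply_smul_eq_of_smul_eq {F ι : Type*} [Field F] {x y : ι → F} {a : F} {i : ι}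
    (h : a • y = x) (hx : x i ≠ 0) : y i ≠ 0 ∧ (x i / y i) • y = x := by
  have hy : y i ≠ 0 := fun h0 => hx (by rw [← h, Pi.smul_apply, h0, smul_zero])
  refine ⟨hy, ?_⟩
  rw [← h, Pi.smul_apply, smul_eq_mul, mul_div_cancel_right₀ _ hy]

def diagPairsEquiv {F : Type*} (α β : F) :
    {v : Fin 2 → Fin 3 → F // v 0 0 = α ∧ v 1 1 = β} ≃ (F × F) × (F × F) where
  toFun v := ((v.1 0 1, v.1 0 2), (v.1 1 0, v.1 1 2))
  invFun p := ⟨![![α, p.1.1, p.1.2], ![p.2.1, β, p.2.2]], rfl, rfl⟩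
  left_inv := fun ⟨v, h0, h1⟩ => by
    ext i j
    fin_cases i <;> fin_cases j <;> simp [h0, h1]
  right_inv _ := rfl

theorem natCard_diagPairs {F : Type*} (α β : F) :
    Nat.card {v : Fin 2 → Fin 3 → F // v 0 0 = α ∧ v 1 1 = β} = Nat.card F ^ 4 := by
  simp only [Nat.card_congr (diagPairsEquiv α β), Nat.card_prod]
  ring

section DependentPairs

variable {F : Type*} [Field F] {α β : F}

theorem div_smul_eq_of_not_linearIndependent {v : Fin 2 → Fin 3 → F}
    (hv : ¬LinearIndependent F v) (h0 : v 0 0 ≠ 0) (h1 : v 1 1 ≠ 0) :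
    v 1 0 ≠ 0 ∧ (v 0 0 / v 1 0) • v 1 = v 0 := by
  obtain ⟨a, ha⟩ := exists_smul_eq_of_not_linearIndependent hv fun h => h1 (by rw [h]; rfl)
  exact Pi.div_apply_smul_eq_of_smul_eq ha h0

def dependentDiagPairsEquiv (hα : α ≠ 0) (hβ : β ≠ 0) :
    {v : Fin 2 → Fin 3 → F // ¬LinearIndependent F v ∧ v 0 0 = α ∧ v 1 1 = β} ≃ Fˣ × F where
  toFun v := (Units.mk0 (v.1 1 0)
    (div_smul_eq_of_not_linearIndependent v.2.1 (by rwa [v.2.2.1]) (by rwa [v.2.2.2])).1, v.1 1 2)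
  invFun p := ⟨![(α / p.1) • ![(p.1 : F), β, p.2], ![(p.1 : F), β, p.2]],
    fun h => (linearIndependent_fin2.1 h).2 (α / p.1) rfl, by simp, rfl⟩
  left_inv := fun ⟨v, hv, h0, h1⟩ => by
    have hdep := (div_smul_eq_of_not_linearIndependent hv (h0 ▸ hα) (h1 ▸ hβ)).2
    have hv1 : ![v 1 0, β, v 1 2] = v 1 := by
      ext j
      fin_cases j <;> simp [h1]
    ext i : 2
    fin_cases i
    · simp [hv1, ← hdep, h0]
    · simpa using hv1
  right_inv _ := Prod.ext (Units.ext rfl) rfl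

theorem natCard_dependentDiagPairs (hα : α ≠ 0) (hβ : β ≠ 0) :
    Nat.card {v : Fin 2 → Fin 3 → F // ¬LinearIndependent F v ∧ v 0 0 = α ∧ v 1 1 = β} =
      (Nat.card F - 1) * Nat.card F := by
  rw [Nat.card_congr (dependentDiagPairsEquiv hα hβ), Nat.card_prod, Nat.card_units]

end DependentPairs

section Count

variable {F : Type*} [Field F] [Finite F] {α β : F}

theorem natCard_linearIndependent_diagPairs (hα : α ≠ 0) (hβ : β ≠ 0) :
    Nat.card {v : Fin 2 → Fin 3 → F // LinearIndependent F v ∧ v 0 0 = α ∧ v 1 1 = β} =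
      Nat.card F ^ 4 - (Nat.card F - 1) * Nat.card F := by
  have hsplit := Nat.card_subtype_and_add_card_subtype_not_and
    (fun v : Fin 2 → Fin 3 → F => LinearIndependent F v)
    fun v : Fin 2 → Fin 3 → F => v 0 0 = α ∧ v 1 1 = β
  rw [natCard_diagPairs, natCard_dependentDiagPairs hα hβ] at hsplit
  omega

theorem natCard_GL_three_diag (hα : α ≠ 0) (hβ : β ≠ 0) :
    Nat.card {B : GL (Fin 3) F //
        (B : Matrix (Fin 3) (Fin 3) F) 0 0 = α ∧ (B : Matrix (Fin 3) (Fin 3) F) 1 1 = β} =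
      (Nat.card F ^ 4 - (Nat.card F - 1) * Nat.card F) * (Nat.card F ^ 3 - Nat.card F ^ 2) := by
  have := Fintype.ofFinite F
  calc _ = Nat.card {s : Fin 3 → Fin 3 → F // LinearIndependent F s ∧ s 0 0 = α ∧ s 1 1 = β} :=
        Matrix.natCard_GL_subtype_col 3 fun s => s 0 0 = α ∧ s 1 1 = β
    _ = Nat.card {v : Fin 2 → Fin 3 → F // LinearIndependent F v ∧ v 0 0 = α ∧ v 1 1 = β} *
          (Nat.card F ^ 3 - Nat.card F ^ 2) := by
        have h := natCard_linearIndependent_snoc (K := F)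
          fun v : Fin 2 → Fin 3 → F => v 0 0 = α ∧ v 1 1 = β
        rwa [finrank_fin_fun] at h
    _ = _ := by rw [natCard_linearIndependent_diagPairs hα hβ]

end Count

theorem card_GL3_N_alpha_negalpha_general (q : ℕ) (F : Type*) [Field F] [Fintype F]
    (hq : Fintype.card F = q) (α : F) (hα : α ≠ 0) :
    (Nat.card {B : GL (Fin 3) F //
        (B : Matrix (Fin 3) (Fin 3) F) 0 0 = α ∧ (B : Matrix (Fin 3) (Fin 3) F) 1 1 = -α} : ℤ) =
      (q : ℤ) * (q : ℤ) ^ 2 * ((q : ℤ) ^ 3 - q ^ 2)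
        + (q : ℤ) * ((q : ℤ) - 1) * ((q : ℤ) ^ 2 - 1) * ((q : ℤ) ^ 3 - q ^ 2) := by
  rw [natCard_GL_three_diag hα (neg_ne_zero.2 hα), Nat.card_eq_fintype_card, hq]
  have hq1 : 1 ≤ q := hq ▸ Fintype.card_pos
  have hdep : (q - 1) * q ≤ q ^ 4 := calc
    (q - 1) * q ≤ q * q ^ 3 := Nat.mul_le_mul (Nat.sub_le q 1) (Nat.le_self_pow three_ne_zero q)
    _ = q ^ 4 := by ring
  have hplane : q ^ 2 ≤ q ^ 3 := Nat.pow_le_pow_right hq1 (by norm_num)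
  push_cast [Nat.cast_sub hdep, Nat.cast_sub hplane, Nat.cast_sub hq1]
  ring

/-- For any nonzero `α ∈ F_q`, the number of invertible 3×3 matrices over `F_q` with
`(1,1)` entry `α` and `(2,2)` entry `-α` is
`q·q^2·(q^3-q^2) + q(q-1)(q^2-1)(q^3-q^2)`; in particular the count is the same for every
nonzero `α`. -/
theorem card_GL3_N_alpha_negalpha (q : ℕ) (F : Type*) [Field F] [Fintype F] [DecidableEq F]
    (hq : Fintype.card F = q) (α : F) (hα : α ≠ 0) :
    (Nat.card {B : GL (Fin 3) F //
        (B : Matrix (Fin 3) (Fin 3) F) 0 0 = α ∧ (B : Matrix (Fin 3) (Fin 3) F) 1 1 = -α} : ℤ) =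
      (q : ℤ) * (q : ℤ) ^ 2 * ((q : ℤ) ^ 3 - q ^ 2)
        + (q : ℤ) * ((q : ℤ) - 1) * ((q : ℤ) ^ 2 - 1) * ((q : ℤ) ^ 3 - q ^ 2) :=
  card_GL3_N_alpha_negalpha_general q F hq α hα
end

section
/- Let H be a finite additive abelian group of order n and S a nonempty subset of H. Define n* = (n/|S|) · max{|Σ_{s ∈ S} χ(s)| : χ is a nontrivial additive character of H}. If X and Y are subsets of H with sqrt(|X|·|Y|) > n*, then there exist x ∈ X and y ∈ Y with y - x ∈ S. -/
/-!
Write `Â ψ = ∑ a ∈ A, ψ a`. Character orthogonality turns the number `E` of pairs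
`(x, y) ∈ X × Y` with `y - x ∈ S` into `n E = ∑_ψ Ŷ ψ · conj (X̂ ψ) · conj (Ŝ ψ)`.
The trivial character contributes `|X| |Y| |S|`; every other term is at most
`M ‖X̂ ψ‖ ‖Ŷ ψ‖`, where `M` bounds `‖Ŝ ψ‖` on nontrivial characters, so by
Cauchy–Schwarz and Parseval (`∑_ψ ‖Â ψ‖² = n |A|`) the rest has size at most `M n √(|X| |Y|)`.
If there is no such pair, `|X| |Y| |S| ≤ M n √(|X| |Y|)`, i.e. `√(|X| |Y|) ≤ n*`.
-/

open Finset ComplexConjugate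

namespace AddChar

lemma sum_product_apply_sub {G : Type*} [AddCommGroup G] [Finite G] (X Y : Finset G)
    (ψ : AddChar G ℂ) :
    ∑ p ∈ X ×ˢ Y, ψ (p.2 - p.1) = (∑ y ∈ Y, ψ y) * conj (∑ x ∈ X, ψ x) := by
  rw [sum_product, mul_comm, map_sum, sum_mul_sum]
  simp_rw [← map_neg_eq_conj, ← map_add_eq_mul, neg_add_eq_sub]

variable {G : Type*} [AddCommGroup G] [Fintype G] [DecidableEq G]

lemma sum_sum_mul_conj_sum {ι κ : Type*} (s : Finset ι) (t : Finset κ) (f : ι → G)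
    (g : κ → G) :
    ∑ ψ : AddChar G ℂ, (∑ i ∈ s, ψ (f i)) * conj (∑ j ∈ t, ψ (g j)) =
      ∑ i ∈ s, ∑ j ∈ t, if f i = g j then (Fintype.card G : ℂ) else 0 := by
  simp_rw [map_sum, sum_mul_sum, ← map_neg_eq_conj, ← map_add_eq_mul, ← sub_eq_add_neg]
  rw [sum_comm]
  refine sum_congr rfl fun i _ => ?_
  rw [sum_comm]
  refine sum_congr rfl fun j _ => ?_
  simp only [sum_apply_eq_ite, sub_eq_zero]

lemma sum_norm_sum_sq (A : Finset G) :
    ∑ ψ : AddChar G ℂ, ‖∑ a ∈ A, ψ a‖ ^ 2 = Fintype.card G * #A := by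
  have h := sum_sum_mul_conj_sum A A id id
  simp only [id, Complex.mul_conj', sum_ite_eq, sum_ite_mem, inter_self, sum_const,
    nsmul_eq_mul] at h
  exact_mod_cast h.trans (mul_comm _ _)

lemma card_mul_card_filter_sub_mem (X Y S : Finset G) :
    (Fintype.card G : ℂ) * #{p ∈ X ×ˢ Y | p.2 - p.1 ∈ S} =
      ∑ ψ : AddChar G ℂ,
        (∑ y ∈ Y, ψ y) * conj (∑ x ∈ X, ψ x) * conj (∑ s ∈ S, ψ s) := by
  simp_rw [← sum_product_apply_sub, sum_sum_mul_conj_sum, sum_ite_eq, ← sum_filter,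
    sum_const, nsmul_eq_mul, mul_comm]

lemma abs_card_mul_card_filter_sub_mem_sub_le (X Y S : Finset G) {M : ℝ} (hM₀ : 0 ≤ M)
    (hM : ∀ ψ : AddChar G ℂ, ψ ≠ 1 → ‖∑ s ∈ S, ψ s‖ ≤ M) :
    |(Fintype.card G : ℝ) * #{p ∈ X ×ˢ Y | p.2 - p.1 ∈ S} - #X * #Y * #S| ≤
      M * Fintype.card G * √(#X * #Y) := by
  set F : AddChar G ℂ → ℂ :=
    fun ψ ↦ (∑ y ∈ Y, ψ y) * conj (∑ x ∈ X, ψ x) * conj (∑ s ∈ S, ψ s)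
  have hF₁ : F 1 = #X * #Y * #S := by simp [F, mul_comm]
  have hsplit :
      ((Fintype.card G * #{p ∈ X ×ˢ Y | p.2 - p.1 ∈ S} - #X * #Y * #S : ℝ) : ℂ) =
        ∑ ψ ∈ univ.erase 1, F ψ := by
    push_cast
    rw [card_mul_card_filter_sub_mem, ← add_sum_erase _ F (mem_univ 1), hF₁,
      add_sub_cancel_left]
  have hF : ∀ ψ ∈ univ.erase (1 : AddChar G ℂ),
      ‖F ψ‖ ≤ M * (‖∑ x ∈ X, ψ x‖ * ‖∑ y ∈ Y, ψ y‖) := by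
    intro ψ hψ
    simp only [F, norm_mul, Complex.norm_conj]
    rw [mul_comm M, mul_comm ‖∑ x ∈ X, ψ x‖]
    exact mul_le_mul_of_nonneg_left (hM ψ (ne_of_mem_erase hψ)) (by positivity)
  calc |(Fintype.card G * #{p ∈ X ×ˢ Y | p.2 - p.1 ∈ S} - #X * #Y * #S : ℝ)|
      = ‖∑ ψ ∈ univ.erase 1, F ψ‖ := by rw [← hsplit, Complex.norm_real, Real.norm_eq_abs]
    _ ≤ ∑ ψ ∈ univ.erase 1, M * (‖∑ x ∈ X, ψ x‖ * ‖∑ y ∈ Y, ψ y‖) :=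
      (norm_sum_le _ _).trans (sum_le_sum hF)
    _ ≤ M * ∑ ψ : AddChar G ℂ, ‖∑ x ∈ X, ψ x‖ * ‖∑ y ∈ Y, ψ y‖ := by
      rw [mul_sum]
      exact sum_le_sum_of_subset_of_nonneg (erase_subset _ _) fun _ _ _ ↦ by positivity
    _ ≤ M * (√(Fintype.card G * #X) * √(Fintype.card G * #Y)) := by
      rw [← sum_norm_sum_sq X, ← sum_norm_sum_sq Y]
      gcongr
      exact Real.sum_mul_le_sqrt_mul_sqrt _ _ _
    _ = M * Fintype.card G * √(#X * #Y) := by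
      rw [← Real.sqrt_mul (by positivity), mul_mul_mul_comm, Real.sqrt_mul (by positivity),
        Real.sqrt_mul_self (by positivity), mul_assoc]

end AddChar

theorem spectral_gap_cayley_general (H : Type*) [AddCommGroup H] [Fintype H]
    (S : Finset H) (hS : S.Nonempty)
    (nstar : ℝ)
    (hnstar : nstar = ((Fintype.card H : ℝ) / (S.card : ℝ)) *
      (⨆ χ : {χ : AddChar H ℂ // χ ≠ 1}, ‖∑ s ∈ S, (χ : AddChar H ℂ) s‖))
    (X Y : Finset H)
    (h : Real.sqrt ((X.card : ℝ) * (Y.card : ℝ)) > nstar) :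
    ∃ x ∈ X, ∃ y ∈ Y, y - x ∈ S := by
  classical
  set M := ⨆ χ : {χ : AddChar H ℂ // χ ≠ 1}, ‖∑ s ∈ S, (χ : AddChar H ℂ) s‖
  have hM₀ : 0 ≤ M := Real.iSup_nonneg fun _ ↦ norm_nonneg _
  have hM : ∀ ψ : AddChar H ℂ, ψ ≠ 1 → ‖∑ s ∈ S, ψ s‖ ≤ M :=
    fun ψ hψ ↦ le_ciSup
      (f := fun χ : {χ : AddChar H ℂ // χ ≠ 1} ↦ ‖∑ s ∈ S, (χ : AddChar H ℂ) s‖)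
      (Set.finite_range _).bddAbove ⟨ψ, hψ⟩
  by_contra hXY
  have hE : #{p ∈ X ×ˢ Y | p.2 - p.1 ∈ S} = 0 := by
    simp only [card_eq_zero, filter_eq_empty_iff, mem_product]
    exact fun p hp hpS ↦ hXY ⟨p.1, hp.1, p.2, hp.2, hpS⟩
  have hmix := AddChar.abs_card_mul_card_filter_sub_mem_sub_le X Y S hM₀ hM
  rw [hE, Nat.cast_zero, mul_zero, zero_sub, abs_neg, abs_of_nonneg (by positivity)] at hmix
  have hS₀ : (0 : ℝ) < #S := by exact_mod_cast hS.card_pos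
  have hσ : 0 < √(#X * #Y : ℝ) := (hnstar ▸ by positivity : 0 ≤ nstar).trans_lt h
  have hσsq : √(#X * #Y : ℝ) ^ 2 = #X * #Y := Real.sq_sqrt (by positivity)
  rw [hnstar, div_mul_eq_mul_div, gt_iff_lt, div_lt_iff₀ hS₀] at h
  nlinarith [mul_lt_mul_of_pos_left h hσ]

/-- Spectral Gap Theorem for Cayley digraphs: for a finite additive abelian group `H` of
order `n` and a nonempty subset `S ⊆ H`, set
`n* = (n/|S|) · max{|∑_{s ∈ S} χ s| : χ a nontrivial additive character of H}`.
If `X, Y ⊆ H` satisfy `√(|X|·|Y|) > n*`, then there exist `x ∈ X` and `y ∈ Y` with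
`y - x ∈ S`. -/
theorem spectral_gap_cayley (H : Type*) [AddCommGroup H] [Fintype H] [DecidableEq H]
    (S : Finset H) (hS : S.Nonempty)
    (nstar : ℝ)
    (hnstar : nstar = ((Fintype.card H : ℝ) / (S.card : ℝ)) *
      (⨆ χ : {χ : AddChar H ℂ // χ ≠ 1}, ‖∑ s ∈ S, (χ : AddChar H ℂ) s‖))
    (X Y : Finset H)
    (h : Real.sqrt ((X.card : ℝ) * (Y.card : ℝ)) > nstar) :
    ∃ x ∈ X, ∃ y ∈ Y, y - x ∈ S :=
  spectral_gap_cayley_general H S hS nstar hnstar X Y h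
end
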